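/- Let (f^* : A ⥤ B, g^* : C ⥤ D, h : A ⥤ C, k : B ⥤ D) together with right adjoints f_* of f^* and g_* of g^* and a natural isomorphism α : k ∘ f^* ≅ g^* ∘ h form a horizontally right adjointable square. Assume moreover that k preserves all small colimits and that every object of B is the colimit of some small diagram all of whose values lie in the essential image of f^*. If f_* Y is h-local for an object Y of B, then Y is k-local. -/

import Mathlib

/-!
For `Z = f^* a`, transposing along both adjunctions and precomposing with `α` identifies
`k : Hom(f^* a, Y) → Hom(k f^* a, k Y)` with `h : Hom(a, f_* Y) → Hom(h a, h f_* Y)` followed by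
composition with the invertible mate, so it is bijective when `f_* Y` is `h`-local. Bijectivity
of `Hom(-, Y) → Hom(k -, k Y)` is stable under isomorphisms and, as `k` preserves colimits,
under colimits, and every object of `B` is a colimit of objects `f^* a`.
-/

open CategoryTheory CategoryTheory.Limits

universe w v₁ v₃ v₄ u₁ u₂ u₃ u₄

/-- `X` is `F`-local if `F` induces a bijection `Hom(Z, X) → Hom(F Z, F X)` for all `Z`. -/
def Local {C : Type u₁} {D : Type u₂} [Category.{v₁} C] [Category.{v₂} D]
    (F : C ⥤ D) (X : C) : Prop :=
  ∀ Z : C, Function.Bijective (fun f : Z ⟶ X => F.map f)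

section

variable {A B C D : Type*} [Category A] [Category B] [Category C] [Category D]

theorem bijective_map_of_iso (F : B ⥤ D) {Z₁ Z₂ Y : B} (e : Z₁ ≅ Z₂)
    (hZ : Function.Bijective (fun f : Z₁ ⟶ Y => F.map f)) :
    Function.Bijective (fun f : Z₂ ⟶ Y => F.map f) := by
  have hcomp : (fun f : Z₂ ⟶ Y => F.map f) =
      (F.mapIso e).homFromEquiv ∘ (fun f : Z₁ ⟶ Y => F.map f) ∘ e.homFromEquiv.symm := by
    ext f
    simp only [Function.comp_apply, Iso.homFromEquiv_apply, Iso.homFromEquiv_symm_apply,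
      Functor.mapIso_inv, ← F.map_comp, e.inv_hom_id_assoc]
  rw [hcomp]
  exact (Equiv.bijective _).comp (hZ.comp (Equiv.bijective _))

theorem bijective_map_of_isColimit (F : B ⥤ D) {J : Type*} [Category J] {W : J ⥤ B}
    {c : Cocone W} (hc : IsColimit c) (hFc : IsColimit (F.mapCocone c)) {Y : B}
    (hW : ∀ j, Function.Bijective (fun f : W.obj j ⟶ Y => F.map f)) :
    Function.Bijective (fun f : c.pt ⟶ Y => F.map f) := by
  constructor
  · intro f g hfg
    exact hc.hom_ext fun j => (hW j).1 (by simp [hfg])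
  · intro t
    choose s hs using fun j => (hW j).2 (F.map (c.ι.app j) ≫ t)
    have hs_w : ∀ {j j' : J} (u : j ⟶ j'), W.map u ≫ s j' = s j := fun u =>
      (hW _).1 (by simp only [Functor.map_comp, hs, ← Category.assoc, ← F.map_comp, c.w u])
    refine ⟨hc.desc ⟨Y, ⟨s, fun _ _ u => by simp [hs_w u]⟩⟩, hFc.hom_ext fun j => ?_⟩
    simpa [← F.map_comp] using hs j

variable {L₁ : A ⥤ B} {R₁ : B ⥤ A} {L₂ : C ⥤ D} {R₂ : D ⥤ C} (adj₁ : L₁ ⊣ R₁) (adj₂ : L₂ ⊣ R₂)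
  {G : A ⥤ C} {H : B ⥤ D}

theorem map_homEquiv_comp_mateEquiv_app (β : TwoSquare G L₁ L₂ H) {a : A} {Y : B}
    (f : L₁.obj a ⟶ Y) :
    G.map (adj₁.homEquiv _ _ f) ≫ (mateEquiv adj₁ adj₂ β).app Y =
      adj₂.homEquiv _ _ (β.app a ≫ H.map f) := by
  have hnat := (mateEquiv adj₁ adj₂ β).naturality f
  simp only [Functor.comp_map] at hnat
  rw [adj₁.homEquiv_unit, adj₂.homEquiv_unit, G.map_comp, Category.assoc, hnat,
    ← Category.assoc, unit_mateEquiv, Category.assoc, R₂.map_comp]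
  rfl

theorem bijective_map_of_isIso_mateEquiv (β : TwoSquare G L₁ L₂ H) {a : A} {Y : B}
    [IsIso (β.app a)] [IsIso ((mateEquiv adj₁ adj₂ β).app Y)]
    (hG : Function.Bijective (fun u : a ⟶ R₁.obj Y => G.map u)) :
    Function.Bijective (fun f : L₁.obj a ⟶ Y => H.map f) := by
  have hcomp : adj₂.homEquiv _ _ ∘ (asIso (β.app a)).homFromEquiv.symm ∘ (fun f => H.map f) =
      (asIso ((mateEquiv adj₁ adj₂ β).app Y)).homToEquiv ∘ (fun u => G.map u) ∘
        adj₁.homEquiv _ _ := by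
    ext f
    simp only [Function.comp_apply, Iso.homFromEquiv_symm_apply, Iso.homToEquiv_apply, asIso_hom,
      map_homEquiv_comp_mateEquiv_app]
  rw [← ((adj₂.homEquiv _ _).bijective.comp
    (asIso (β.app a)).homFromEquiv.symm.bijective).of_comp_iff', Function.comp_assoc, hcomp]
  exact (Equiv.bijective _).comp (hG.comp (Equiv.bijective _))

end

theorem stmt8 {A : Type u₁} {B : Type u₂} {C : Type u₃} {D : Type u₄}
    [Category.{v₁} A] [Category.{w} B] [Category.{v₃} C] [Category.{v₄} D]
    (fstar : A ⥤ B) (fpush : B ⥤ A) (adjf : fstar ⊣ fpush)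
    (gstar : C ⥤ D) (gpush : D ⥤ C) (adjg : gstar ⊣ gpush)
    (h : A ⥤ C) (k : B ⥤ D) (α : fstar ⋙ k ≅ h ⋙ gstar)
    (hmate : IsIso (mateEquiv adjf adjg α.inv))
    [PreservesColimitsOfSize.{w, w} k]
    (hcover : ∀ b : B, ∃ (J : Cat.{w, w}) (W : J ⥤ B) (c : Cocone W),
      (∀ j : J, fstar.essImage (W.obj j)) ∧ Nonempty (IsColimit c) ∧ Nonempty (c.pt ≅ b))
    (Y : B) (hY : Local h (fpush.obj Y)) :
    Local k Y := by
  have := NatIso.isIso_app_of_isIso (mateEquiv adjf adjg α.inv) Y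
  intro Z
  obtain ⟨J, W, c, hW, ⟨hc⟩, ⟨e⟩⟩ := hcover Z
  refine bijective_map_of_iso k e (bijective_map_of_isColimit k hc (isColimitOfPreserves k hc) ?_)
  intro j
  obtain ⟨a, ⟨e'⟩⟩ := hW j
  exact bijective_map_of_iso k e' (bijective_map_of_isIso_mateEquiv adjf adjg α.inv (hY a))
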